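/- arXiv:2111.06043 — 4 statements merged into one kernel-verified Lean document; each statement's English description precedes it below -/
import Mathlib

section
/- Let d, d', n be positive integers with gcd(d, n+1) ∣ d'. Then there exists a group homomorphism φ : GL_{n+1}(K)/μ_d → GL_{n+1}(K)/μ_{d'} over PGL_{n+1}(K). Explicitly, choosing an integer k with d ∣ k(n+1) + d', the assignment sending the class of A ∈ GL_{n+1}(K) to the class of β·A, where β ∈ K is any element with β^{d'} = det(A)^k, is independent of all choices, well defined on classes, and is such a homomorphism. -/
/-
Choose for every `A` a scalar `β_A` with `β_A ^ d' = det A ^ k` (`K` is algebraically closed).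
Scalars with equal `d'`-th powers differ by an element of `μ_{d'}`, so `A ↦ [β_A · A]` is a
homomorphism `GL_{n+1}(K) → GL_{n+1}(K)/μ_{d'}` independent of the choice, and it lies over
`PGL_{n+1}(K)` because `β_A · A` and `A` differ by a scalar. For `ζ ∈ μ_d` we get
`(β_ζ ζ) ^ d' = ζ ^ (k(n+1) + d') = 1` since `d ∣ k(n+1) + d'`, so `μ_d` lies in the kernel.
A suitable `k` exists by Bézout because `gcd(d, n+1) ∣ d'`.
-/

noncomputable section

open Matrix

variable (K : Type*) [Field K]

/-- The group homomorphism `Kˣ →* GL (Fin n) K` sending a unit of `K` to the corresponding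
invertible scalar matrix. -/
def scalarHom (n : ℕ) : Kˣ →* GL (Fin n) K :=
  Units.map (algebraMap K (Matrix (Fin n) (Fin n) K)).toMonoidHom

theorem scalarHom_mem_center (n : ℕ) (ζ : Kˣ) :
    scalarHom K n ζ ∈ Subgroup.center (GL (Fin n) K) := by
  rw [Subgroup.mem_center_iff]
  intro g
  refine Units.ext ?_
  simp only [Units.val_mul, scalarHom, Units.coe_map, RingHom.toMonoidHom_eq_coe,
    MonoidHom.coe_coe]
  exact (Algebra.commutes (ζ : K) (g : Matrix (Fin n) (Fin n) K)).symm

/-- `μ_d`: the central subgroup of `GL (Fin n) K` consisting of scalar matrices `ζ • 1`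
with `ζ ^ d = 1`. -/
def muGL (n d : ℕ) : Subgroup (GL (Fin n) K) :=
  (rootsOfUnity d K).map (scalarHom K n)

theorem muGL_le_center (n d : ℕ) :
    muGL K n d ≤ Subgroup.center (GL (Fin n) K) := by
  rintro x ⟨ζ, -, rfl⟩
  exact scalarHom_mem_center K n ζ

instance muGL_normal (n d : ℕ) : (muGL K n d).Normal := by
  constructor
  intro x hx g
  have h := Subgroup.mem_center_iff.mp (muGL_le_center K n d hx) g
  have hg : g * x * g⁻¹ = x := by rw [h, mul_inv_cancel_right]
  rwa [hg]

/-- The subgroup `Z = Kˣ·I` of all invertible scalar matrices in `GL (Fin n) K`. -/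
def scalarSub (n : ℕ) : Subgroup (GL (Fin n) K) := (scalarHom K n).range

instance scalarSub_normal (n : ℕ) : (scalarSub K n).Normal := by
  constructor
  intro x hx g
  obtain ⟨ζ, rfl⟩ := hx
  have h := Subgroup.mem_center_iff.mp (scalarHom_mem_center K n ζ) g
  have hg : g * scalarHom K n ζ * g⁻¹ = scalarHom K n ζ := by rw [h, mul_inv_cancel_right]
  rw [hg]
  exact ⟨ζ, rfl⟩

/-- `PGL_n(K) = GL_n(K) / Z` where `Z` is the subgroup of invertible scalar matrices. -/
abbrev PGL (n : ℕ) := GL (Fin n) K ⧸ scalarSub K n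

theorem muGL_le_scalarSub (n d : ℕ) : muGL K n d ≤ scalarSub K n :=
  Subgroup.map_le_range _ _

/-- The natural projection `GL_n(K)/μ_d → PGL_n(K)`. -/
def projToPGL (n d : ℕ) : (GL (Fin n) K ⧸ muGL K n d) →* PGL K n :=
  QuotientGroup.map _ _ (MonoidHom.id _)
    (fun x hx => by simpa using muGL_le_scalarSub K n d hx)

open QuotientGroup Matrix.GeneralLinearGroup

variable {K}

theorem Int.exists_dvd_mul_add_of_gcd_dvd {d m d' : ℕ} (h : Nat.gcd d m ∣ d') :
    ∃ k : ℤ, (d : ℤ) ∣ k * m + d' := by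
  obtain ⟨x, y, hxy⟩ := Int.gcd_dvd_iff.mp (show Int.gcd d m ∣ d' from h)
  exact ⟨-y, x, by rw [hxy]; ring⟩

theorem Units.exists_pow_eq_of_isAlgClosed [IsAlgClosed K] (x : Kˣ)
    {d : ℕ} (hd : 0 < d) : ∃ β : Kˣ, β ^ d = x := by
  obtain ⟨z, hz⟩ := IsAlgClosed.exists_pow_nat_eq (x : K) hd
  have hz0 : z ≠ 0 := by
    rintro rfl
    exact x.ne_zero (by rw [← hz, zero_pow hd.ne'])
  exact ⟨Units.mk0 z hz0, Units.ext hz⟩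

section Scalars

variable {n : ℕ}

theorem scalarHom_commute (β : Kˣ) (A : GL (Fin n) K) : Commute (scalarHom K n β) A :=
  ((Subgroup.mem_center_iff.mp (scalarHom_mem_center K n β) A)).symm

theorem det_scalarHom (β : Kˣ) : det (scalarHom K n β) = β ^ n := by
  ext
  simp [scalarHom, Matrix.algebraMap_eq_diagonal, Matrix.det_diagonal]

theorem scalarHom_mem_muGL {d : ℕ} {β : Kˣ} (h : β ^ d = 1) : scalarHom K n β ∈ muGL K n d :=
  ⟨β, (mem_rootsOfUnity d β).mpr h, rfl⟩

theorem mk_scalarHom_eq_of_pow_eq {d : ℕ} {β γ : Kˣ} (h : β ^ d = γ ^ d) :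
    (mk (scalarHom K n β) : GL (Fin n) K ⧸ muGL K n d) = mk (scalarHom K n γ) := by
  rw [QuotientGroup.eq, ← map_inv, ← map_mul]
  exact scalarHom_mem_muGL (by rw [mul_pow, inv_pow, h, inv_mul_cancel])

theorem mk_scalarHom_mul_eq_of_pow_eq {d : ℕ} {β γ : Kˣ} (h : β ^ d = γ ^ d) (A : GL (Fin n) K) :
    (mk (scalarHom K n β * A) : GL (Fin n) K ⧸ muGL K n d) = mk (scalarHom K n γ * A) := by
  rw [mk_mul, mk_mul, mk_scalarHom_eq_of_pow_eq h]

theorem projToPGL_mk_scalarHom_mul (d : ℕ) (β : Kˣ) (A : GL (Fin n) K) :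
    projToPGL K n d (mk (scalarHom K n β * A)) = mk A := by
  rw [projToPGL, map_mk, MonoidHom.id_apply, mk_mul,
    (eq_one_iff (N := scalarSub K n) _).mpr ⟨β, rfl⟩, one_mul]

end Scalars

namespace ScalarTwist

variable {n d d' : ℕ} {k : ℤ}

def toQuotient (β : GL (Fin n) K → Kˣ) (hβ : ∀ A, β A ^ d' = det A ^ k) :
    GL (Fin n) K →* GL (Fin n) K ⧸ muGL K n d' where
  toFun A := mk (scalarHom K n (β A) * A)
  map_one' := by
    rw [mk_scalarHom_mul_eq_of_pow_eq (γ := 1) (by rw [hβ, map_one, _root_.one_zpow, one_pow])]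
    simp
  map_mul' A B := by
    have hpow : β (A * B) ^ d' = (β A * β B) ^ d' := by
      rw [mul_pow, hβ, hβ, hβ, map_mul, mul_zpow]
    rw [mk_scalarHom_mul_eq_of_pow_eq hpow, ← mk_mul, map_mul,
      (scalarHom_commute (β B) A).mul_mul_mul_comm]

theorem toQuotient_apply (β : GL (Fin n) K → Kˣ) (hβ : ∀ A, β A ^ d' = det A ^ k)
    (A : GL (Fin n) K) : toQuotient β hβ A = mk (scalarHom K n (β A) * A) :=
  rfl

theorem muGL_le_ker_toQuotient (β : GL (Fin n) K → Kˣ) (hβ : ∀ A, β A ^ d' = det A ^ k)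
    (hk : (d : ℤ) ∣ k * n + d') : muGL K n d ≤ (toQuotient β hβ).ker := by
  rintro _ ⟨ζ, hζ, rfl⟩
  obtain ⟨m, hm⟩ := hk
  rw [MonoidHom.mem_ker, toQuotient_apply, ← map_mul, eq_one_iff]
  refine scalarHom_mem_muGL ?_
  calc (β (scalarHom K n ζ) * ζ) ^ d' = ζ ^ (k * n + d') := by
        rw [mul_pow, hβ, det_scalarHom, ← zpow_natCast, ← _root_.zpow_mul, ← zpow_natCast ζ d',
          ← _root_.zpow_add, mul_comm (n : ℤ)]
    _ = 1 := by
        rw [hm, _root_.zpow_mul, zpow_natCast, (mem_rootsOfUnity d ζ).mp hζ, _root_.one_zpow]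

def lift (β : GL (Fin n) K → Kˣ) (hβ : ∀ A, β A ^ d' = det A ^ k)
    (hk : (d : ℤ) ∣ k * n + d') : GL (Fin n) K ⧸ muGL K n d →* GL (Fin n) K ⧸ muGL K n d' :=
  QuotientGroup.lift _ (toQuotient β hβ) (muGL_le_ker_toQuotient β hβ hk)

variable (β : GL (Fin n) K → Kˣ) (hβ : ∀ A, β A ^ d' = det A ^ k) (hk : (d : ℤ) ∣ k * n + d')

theorem lift_mk {A : GL (Fin n) K} {γ : Kˣ} (hγ : γ ^ d' = det A ^ k) :
    lift β hβ hk (mk A) = mk (scalarHom K n γ * A) :=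
  mk_scalarHom_mul_eq_of_pow_eq (by rw [hβ, hγ]) A

theorem projToPGL_comp_lift : (projToPGL K n d').comp (lift β hβ hk) = projToPGL K n d := by
  refine QuotientGroup.monoidHom_ext _ (MonoidHom.ext fun A => ?_)
  exact (projToPGL_mk_scalarHom_mul d' (β A) A).trans rfl

end ScalarTwist

theorem exists_hom_over_PGL_of_dvd [IsAlgClosed K] {n d d' : ℕ} {k : ℤ} (hd' : 0 < d')
    (hk : (d : ℤ) ∣ k * n + d') :
    ∃ φ : GL (Fin n) K ⧸ muGL K n d →* GL (Fin n) K ⧸ muGL K n d',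
      (projToPGL K n d').comp φ = projToPGL K n d ∧
      ∀ (A : GL (Fin n) K) (γ : Kˣ), γ ^ d' = det A ^ k → φ (mk A) = mk (scalarHom K n γ * A) := by
  choose β hβ using fun A : GL (Fin n) K => (det A ^ k).exists_pow_eq_of_isAlgClosed hd'
  exact ⟨ScalarTwist.lift β hβ hk, ScalarTwist.projToPGL_comp_lift β hβ hk,
    fun _ _ hγ => ScalarTwist.lift_mk β hβ hk hγ⟩

theorem exists_hom_GLmod_over_PGL_general
    {K : Type*} [Field K] [IsAlgClosed K] (n d d' : ℕ)
    (hd' : 0 < d')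
    (hgcd : Nat.gcd d (n + 1) ∣ d') :
    (∃ φ : (GL (Fin (n + 1)) K ⧸ muGL K (n + 1) d) →*
        (GL (Fin (n + 1)) K ⧸ muGL K (n + 1) d'),
      (projToPGL K (n + 1) d').comp φ = projToPGL K (n + 1) d) ∧
    ∀ k : ℤ, (d : ℤ) ∣ k * ((n : ℤ) + 1) + (d' : ℤ) →
      ∃ φ : (GL (Fin (n + 1)) K ⧸ muGL K (n + 1) d) →*
          (GL (Fin (n + 1)) K ⧸ muGL K (n + 1) d'),
        (projToPGL K (n + 1) d').comp φ = projToPGL K (n + 1) d ∧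
        ∀ (A : GL (Fin (n + 1)) K) (β : Kˣ),
          β ^ d' = (Matrix.GeneralLinearGroup.det A) ^ k →
          φ (QuotientGroup.mk A) = QuotientGroup.mk (scalarHom K (n + 1) β * A) := by
  have twist (k : ℤ) (hk : (d : ℤ) ∣ k * ((n : ℤ) + 1) + d') :=
    exists_hom_over_PGL_of_dvd (K := K) (n := n + 1) hd' (by exact_mod_cast hk)
  obtain ⟨k, hk⟩ := Int.exists_dvd_mul_add_of_gcd_dvd hgcd
  obtain ⟨φ, hφ, -⟩ := twist k (by exact_mod_cast hk)
  exact ⟨⟨φ, hφ⟩, twist⟩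

/-- Lemma 3.1 (constructive direction): if `gcd(d, n+1) ∣ d'` then there is a group
homomorphism `GL_{n+1}(K)/μ_d → GL_{n+1}(K)/μ_{d'}` over `PGL_{n+1}(K)`; explicitly, for any
integer `k` with `d ∣ k(n+1) + d'`, the class of `A` is sent to the class of `β·A` for any
`β` with `β^{d'} = det(A)^k`. -/
theorem exists_hom_GLmod_over_PGL
    {K : Type*} [Field K] [IsAlgClosed K] (n d d' : ℕ)
    (hn : 1 ≤ n) (hd : 0 < d) (hd' : 0 < d')
    (hgcd : Nat.gcd d (n + 1) ∣ d') :
    (∃ φ : (GL (Fin (n + 1)) K ⧸ muGL K (n + 1) d) →*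
        (GL (Fin (n + 1)) K ⧸ muGL K (n + 1) d'),
      (projToPGL K (n + 1) d').comp φ = projToPGL K (n + 1) d) ∧
    ∀ k : ℤ, (d : ℤ) ∣ k * ((n : ℤ) + 1) + (d' : ℤ) →
      ∃ φ : (GL (Fin (n + 1)) K ⧸ muGL K (n + 1) d) →*
          (GL (Fin (n + 1)) K ⧸ muGL K (n + 1) d'),
        (projToPGL K (n + 1) d').comp φ = projToPGL K (n + 1) d ∧
        ∀ (A : GL (Fin (n + 1)) K) (β : Kˣ),
          β ^ d' = (Matrix.GeneralLinearGroup.det A) ^ k →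
          φ (QuotientGroup.mk A) = QuotientGroup.mk (scalarHom K (n + 1) β * A) :=
  exists_hom_GLmod_over_PGL_general n d d' hd' hgcd

end
end

section
/- There exists a group homomorphism φ : Γ(l1, l2) → Γ(d1, d2) over PGL_2(K), i.e., a group homomorphism commuting with the natural maps of both groups to PGL_2(K). -/
noncomputable section

open Matrix

variable (K : Type*) [Field K]

/-- The embedding `i : Kˣ × Kˣ →* Kˣ × GL₂(K)`, `(x₁, x₂) ↦ (x₂/x₁, x₁·I₂)`. -/
def iEmb : Kˣ × Kˣ →* Kˣ × GL (Fin 2) K :=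
  ((MonoidHom.snd Kˣ Kˣ) * (MonoidHom.fst Kˣ Kˣ)⁻¹).prod
    ((scalarHom K 2).comp (MonoidHom.fst Kˣ Kˣ))

/-- The central subgroup `i(μ_a × μ_b)` of `Kˣ × GL₂(K)`. -/
def muGamma (a b : ℕ) : Subgroup (Kˣ × GL (Fin 2) K) :=
  ((rootsOfUnity a K).prod (rootsOfUnity b K)).map (iEmb K)

theorem muGamma_le_center (a b : ℕ) :
    muGamma K a b ≤ Subgroup.center (Kˣ × GL (Fin 2) K) := by
  rintro x ⟨⟨x1, x2⟩, -, rfl⟩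
  rw [Subgroup.mem_center_iff]
  intro g
  have h2 := Subgroup.mem_center_iff.mp (scalarHom_mem_center K 2 x1) g.2
  refine Prod.ext ?_ ?_
  · simpa [iEmb] using mul_comm g.1 (x2 * x1⁻¹)
  · simpa [iEmb] using h2

instance muGamma_normal (a b : ℕ) : (muGamma K a b).Normal := by
  constructor
  intro x hx g
  have h := Subgroup.mem_center_iff.mp (muGamma_le_center K a b hx) g
  have hg : g * x * g⁻¹ = x := by rw [h, mul_inv_cancel_right]
  rwa [hg]

/-- The group `Γ(a, b) = (Kˣ × GL₂(K)) / i(μ_a × μ_b)`. -/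
abbrev Gamma (a b : ℕ) := (Kˣ × GL (Fin 2) K) ⧸ muGamma K a b

/-- The homomorphism `Kˣ × GL₂(K) →* PGL₂(K)`, `(α, A) ↦ [A]`. -/
def sndPGL : (Kˣ × GL (Fin 2) K) →* PGL K 2 :=
  (QuotientGroup.mk' (scalarSub K 2)).comp (MonoidHom.snd Kˣ (GL (Fin 2) K))

theorem muGamma_le_ker (a b : ℕ) : muGamma K a b ≤ (sndPGL K).ker := by
  rintro x ⟨⟨x1, x2⟩, -, rfl⟩
  rw [MonoidHom.mem_ker]
  simp only [sndPGL, iEmb, MonoidHom.comp_apply, MonoidHom.prod_apply]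
  rw [QuotientGroup.mk'_apply, QuotientGroup.eq_one_iff]
  exact ⟨x1, rfl⟩

/-- The natural homomorphism `Γ(a, b) →* PGL₂(K)` descending `(α, A) ↦ [A]`. -/
def GammaToPGL (a b : ℕ) : Gamma K a b →* PGL K 2 :=
  QuotientGroup.lift (muGamma K a b) (sndPGL K)
    (fun _ hx => MonoidHom.mem_ker.mp (muGamma_le_ker K a b hx))


private lemma exists_ab_aux (d1 d2 l1 l2 : ℕ) (hd1 : 0 < d1) (hd2 : 0 < d2)
    (hl1 : (l1 : ℤ) = 2 * (d1 : ℤ) - (d2 : ℤ)) (hl2 : (l2 : ℤ) = 2 * (d2 : ℤ) - (d1 : ℤ)) :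
    ∃ a b : ℕ, Odd (a + b) ∧ l1 ∣ a * d1 ∧ l1 ∣ a * d2 ∧ l2 ∣ b * d1 ∧ l2 ∣ b * d2 := by
  set g := Nat.gcd d1 d2 with hg
  have hg0 : 0 < g := Nat.gcd_pos_of_pos_left d2 hd1
  have hgd1 : g ∣ d1 := Nat.gcd_dvd_left d1 d2
  have hgd2 : g ∣ d2 := Nat.gcd_dvd_right d1 d2
  have hgl1 : g ∣ l1 := by
    have h : (g : ℤ) ∣ (l1 : ℤ) := by
      rw [hl1]
      exact dvd_sub (Dvd.dvd.mul_left (Int.natCast_dvd_natCast.mpr hgd1) 2)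
        (Int.natCast_dvd_natCast.mpr hgd2)
    exact_mod_cast h
  have hgl2 : g ∣ l2 := by
    have h : (g : ℤ) ∣ (l2 : ℤ) := by
      rw [hl2]
      exact dvd_sub (Dvd.dvd.mul_left (Int.natCast_dvd_natCast.mpr hgd2) 2)
        (Int.natCast_dvd_natCast.mpr hgd1)
    exact_mod_cast h
  have hdvd1 : ∀ e : ℕ, g ∣ e → l1 ∣ (l1 / g) * e := by
    rintro e ⟨e', rfl⟩
    rw [← mul_assoc, Nat.div_mul_cancel hgl1]
    exact dvd_mul_right _ _
  have hdvd2 : ∀ e : ℕ, g ∣ e → l2 ∣ (l2 / g) * e := by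
    rintro e ⟨e', rfl⟩
    rw [← mul_assoc, Nat.div_mul_cancel hgl2]
    exact dvd_mul_right _ _
  by_cases h : Odd (l1 / g)
  · exact ⟨l1 / g, 0, by simpa using h, hdvd1 d1 hgd1, hdvd1 d2 hgd2, by simp, by simp⟩
  · have hodd2 : Odd (l2 / g) := by
      by_contra h2
      rw [Nat.not_odd_iff_even, Nat.even_iff] at h h2
      have e1 : l1 = g * (l1 / g) := (Nat.mul_div_cancel' hgl1).symm
      have e2 : l2 = g * (l2 / g) := (Nat.mul_div_cancel' hgl2).symm
      have e3 : d1 = g * (d1 / g) := (Nat.mul_div_cancel' hgd1).symm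
      have e4 : d2 = g * (d2 / g) := (Nat.mul_div_cancel' hgd2).symm
      have c1 : ((l1 / g : ℕ) : ℤ) = 2 * ((d1 / g : ℕ) : ℤ) - ((d2 / g : ℕ) : ℤ) := by
        have h' : ((g * (l1 / g) : ℕ) : ℤ)
            = 2 * ((g * (d1 / g) : ℕ) : ℤ) - ((g * (d2 / g) : ℕ) : ℤ) := by
          rw [← e1, ← e3, ← e4]; exact hl1
        rw [Nat.cast_mul, Nat.cast_mul, Nat.cast_mul] at h'
        have h'' : (g : ℤ) * ((l1 / g : ℕ) : ℤ)
            = (g : ℤ) * (2 * ((d1 / g : ℕ) : ℤ) - ((d2 / g : ℕ) : ℤ)) := by linarith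
        exact mul_left_cancel₀ (by exact_mod_cast hg0.ne') h''
      have c2 : ((l2 / g : ℕ) : ℤ) = 2 * ((d2 / g : ℕ) : ℤ) - ((d1 / g : ℕ) : ℤ) := by
        have h' : ((g * (l2 / g) : ℕ) : ℤ)
            = 2 * ((g * (d2 / g) : ℕ) : ℤ) - ((g * (d1 / g) : ℕ) : ℤ) := by
          rw [← e2, ← e3, ← e4]; exact hl2
        rw [Nat.cast_mul, Nat.cast_mul, Nat.cast_mul] at h'
        have h'' : (g : ℤ) * ((l2 / g : ℕ) : ℤ)
            = (g : ℤ) * (2 * ((d2 / g : ℕ) : ℤ) - ((d1 / g : ℕ) : ℤ)) := by linarith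
        exact mul_left_cancel₀ (by exact_mod_cast hg0.ne') h''
      have hD1 : 2 ∣ d1 / g ∧ 2 ∣ d2 / g := by omega
      have hco : Nat.Coprime (d1 / g) (d2 / g) := Nat.coprime_div_gcd_div_gcd hg0
      have : (2 : ℕ) ∣ 1 := hco ▸ Nat.dvd_gcd hD1.1 hD1.2
      omega
    exact ⟨0, l2 / g, by simpa using hodd2, by simp, by simp, hdvd2 d1 hgd1, hdvd2 d2 hgd2⟩

/-- Theorem 4.9: there exists a group homomorphism `Γ(l₁, l₂) → Γ(d₁, d₂)` over `PGL₂(K)`. -/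
theorem exists_hom_Gamma_over_PGL
    {K : Type*} [Field K] [IsAlgClosed K]
    (d1 d2 l1 l2 : ℕ) (hd1 : 0 < d1) (hd2 : 0 < d2)
    (hl1 : (l1 : ℤ) = 2 * (d1 : ℤ) - (d2 : ℤ)) (hl2 : (l2 : ℤ) = 2 * (d2 : ℤ) - (d1 : ℤ))
    (hl1' : 4 ≤ l1) (hl2' : 4 ≤ l2)
    (hchar : ¬ (ringChar K ∣ 2 * l1 * l2)) :
    ∃ φ : Gamma K l1 l2 →* Gamma K d1 d2,
      (GammaToPGL K d1 d2).comp φ = GammaToPGL K l1 l2 := by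
  obtain ⟨a, b, hodd, h11, h12, h21, h22⟩ := exists_ab_aux d1 d2 l1 l2 hd1 hd2 hl1 hl2
  obtain ⟨q, hq⟩ := hodd
  have hcomm : ∀ (c : Kˣ) (A : GL (Fin 2) K), Commute (scalarHom K 2 c) A := fun c A =>
    (Subgroup.mem_center_iff.mp (scalarHom_mem_center K 2 c) A).symm
  set D : GL (Fin 2) K →* Kˣ := Matrix.GeneralLinearGroup.det with hD
  let F : Kˣ × GL (Fin 2) K →* Kˣ × GL (Fin 2) K :=
  { toFun := fun x => (1, scalarHom K 2 (x.1 ^ b * (D x.2) ^ q) * x.2)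
    map_one' := by simp
    map_mul' := fun x y => by
      refine Prod.ext (by simp) ?_
      show scalarHom K 2 ((x.1 * y.1) ^ b * (D (x.2 * y.2)) ^ q) * (x.2 * y.2)
          = (scalarHom K 2 (x.1 ^ b * (D x.2) ^ q) * x.2) * (scalarHom K 2 (y.1 ^ b * (D y.2) ^ q) * y.2)
      have hc : (x.1 * y.1) ^ b * (D (x.2 * y.2)) ^ q
          = (x.1 ^ b * (D x.2) ^ q) * (y.1 ^ b * (D y.2) ^ q) := by
        rw [_root_.map_mul, mul_pow, mul_pow]
        exact mul_mul_mul_comm _ _ _ _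
      rw [hc, _root_.map_mul]
      exact (hcomm _ x.2).mul_mul_mul_comm _ _ }
  have hdetscalar : ∀ c : Kˣ, D (scalarHom K 2 c) = c ^ 2 := by
    intro c
    refine Units.ext ?_
    show ((scalarHom K 2 c : GL (Fin 2) K) : Matrix (Fin 2) (Fin 2) K).det = (c : K) ^ 2
    have h : ((scalarHom K 2 c : GL (Fin 2) K) : Matrix (Fin 2) (Fin 2) K)
        = (c : K) • (1 : Matrix (Fin 2) (Fin 2) K) := by
      simp [scalarHom, Algebra.algebraMap_eq_smul_one]
    rw [h, Matrix.det_smul, Matrix.det_one]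
    simp
  have hker : ∀ x ∈ muGamma K l1 l2, ((QuotientGroup.mk' (muGamma K d1 d2)).comp F) x = 1 := by
    rintro x ⟨⟨x1, x2⟩, hmem, rfl⟩
    obtain ⟨hx1, hx2⟩ := Subgroup.mem_prod.mp hmem
    rw [mem_rootsOfUnity] at hx1 hx2
    have hx1' : x1 ^ l1 = 1 := hx1
    have hx2' : x2 ^ l2 = 1 := hx2
    set y : Kˣ := x2 ^ b * x1 ^ (a + b) * (x1 ^ b)⁻¹ with hy
    have hFval : F (iEmb K (x1, x2)) = (1, scalarHom K 2 y) := by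
      refine Prod.ext rfl ?_
      show scalarHom K 2 ((x2 * x1⁻¹) ^ b * (D (scalarHom K 2 x1)) ^ q) * scalarHom K 2 x1
          = scalarHom K 2 y
      rw [hdetscalar, ← _root_.map_mul]
      congr 1
      rw [hy, hq, mul_pow, inv_pow, ← pow_mul, pow_succ]
      simp [mul_comm, mul_assoc, mul_left_comm]
    have hroot : ∀ d : ℕ, l1 ∣ a * d → l2 ∣ b * d → y ^ d = 1 := by
      intro d had hbd
      have e2 : x2 ^ (b * d) = 1 := by
        obtain ⟨k, hk⟩ := hbd; rw [hk, pow_mul, hx2', one_pow]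
      have e1 : x1 ^ (a * d) = 1 := by
        obtain ⟨k, hk⟩ := had; rw [hk, pow_mul, hx1', one_pow]
      rw [hy, mul_pow, mul_pow, inv_pow, ← pow_mul, ← pow_mul, ← pow_mul,
        add_mul, pow_add, e1, e2, one_mul, one_mul, mul_inv_cancel]
    show (QuotientGroup.mk' (muGamma K d1 d2)) (F (iEmb K (x1, x2))) = 1
    rw [hFval, QuotientGroup.mk'_apply, QuotientGroup.eq_one_iff]
    refine ⟨(y, y), Subgroup.mem_prod.mpr ⟨?_, ?_⟩, ?_⟩
    · rw [mem_rootsOfUnity]; exact hroot d1 h11 h21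
    · rw [mem_rootsOfUnity]; exact hroot d2 h12 h22
    · refine Prod.ext ?_ rfl
      show y * y⁻¹ = 1
      exact mul_inv_cancel y
  refine ⟨QuotientGroup.lift _ ((QuotientGroup.mk' (muGamma K d1 d2)).comp F) hker, ?_⟩
  refine QuotientGroup.monoidHom_ext _ (MonoidHom.ext fun x => ?_)
  show GammaToPGL K d1 d2 (QuotientGroup.mk (F x)) = GammaToPGL K l1 l2 (QuotientGroup.mk x)
  show sndPGL K (F x) = sndPGL K x
  have h1 : (QuotientGroup.mk' (scalarSub K 2)) (scalarHom K 2 (x.1 ^ b * (D x.2) ^ q)) = 1 :=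
    (QuotientGroup.eq_one_iff _).mpr ⟨_, rfl⟩
  show (QuotientGroup.mk' (scalarSub K 2)) (scalarHom K 2 (x.1 ^ b * (D x.2) ^ q) * x.2)
      = (QuotientGroup.mk' (scalarSub K 2)) x.2
  rw [_root_.map_mul, h1, one_mul]


end
end

section
/- If d1 is odd or d2 is odd, then there exists a group homomorphism Γ(l1, l2) → GL_2(K) over PGL_2(K), i.e., commuting with the natural maps to PGL_2(K). -/
noncomputable section

open Matrix

variable (K : Type*) [Field K]

theorem det_scalarHom_s9 (ζ : Kˣ) :
    Matrix.GeneralLinearGroup.det (scalarHom K 2 ζ) = ζ ^ 2 := by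
  refine Units.ext ?_
  have h : (algebraMap K (Matrix (Fin 2) (Fin 2) K)) (ζ : K) = (ζ : K) • 1 :=
    Algebra.algebraMap_eq_smul_one _
  rw [Matrix.GeneralLinearGroup.val_det_apply]
  show ((scalarHom K 2 ζ : GL (Fin 2) K) : Matrix (Fin 2) (Fin 2) K).det = ((ζ ^ 2 : Kˣ) : K)
  have h2 : ((scalarHom K 2 ζ : GL (Fin 2) K) : Matrix (Fin 2) (Fin 2) K)
      = (algebraMap K (Matrix (Fin 2) (Fin 2) K)) (ζ : K) := rfl
  rw [h2, h, Matrix.det_smul, Matrix.det_one]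
  simp

/-- The scalar character `(α, A) ↦ α^a * (det A)^k`. -/
def chiHom (a k : ℕ) : Kˣ × GL (Fin 2) K →* Kˣ :=
  ((MonoidHom.fst Kˣ (GL (Fin 2) K)) ^ a) *
    ((Matrix.GeneralLinearGroup.det.comp (MonoidHom.snd Kˣ (GL (Fin 2) K))) ^ k)

theorem chiHom_apply (a k : ℕ) (p : Kˣ × GL (Fin 2) K) :
    chiHom K a k p = p.1 ^ a * (Matrix.GeneralLinearGroup.det p.2) ^ k := rfl

/-- The twisted homomorphism `(α, A) ↦ (α^a (det A)^k) · A`. -/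
def phiHom (a k : ℕ) : Kˣ × GL (Fin 2) K →* GL (Fin 2) K where
  toFun p := scalarHom K 2 (chiHom K a k p) * p.2
  map_one' := by simp
  map_mul' p q := by
    have hc := Subgroup.mem_center_iff.mp
      (scalarHom_mem_center K 2 (chiHom K a k q)) p.2
    show scalarHom K 2 (chiHom K a k (p * q)) * (p * q).2
        = scalarHom K 2 (chiHom K a k p) * p.2 * (scalarHom K 2 (chiHom K a k q) * q.2)
    rw [_root_.map_mul, _root_.map_mul, Prod.snd_mul, mul_assoc, mul_assoc,
      ← mul_assoc (scalarHom K 2 (chiHom K a k q)), ← hc, mul_assoc]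

theorem key_lemma (a k l1 l2 : ℕ)
    (hker : ∀ x1 x2 : Kˣ, x1 ∈ rootsOfUnity l1 K → x2 ∈ rootsOfUnity l2 K →
      (x2 * x1⁻¹) ^ a * (x1 ^ 2) ^ k * x1 = 1) :
    ∃ Ψ : Gamma K l1 l2 →* GL (Fin 2) K,
      (QuotientGroup.mk' (scalarSub K 2)).comp Ψ = GammaToPGL K l1 l2 := by
  have hφ : ∀ x ∈ muGamma K l1 l2, phiHom K a k x = 1 := by
    rintro _ ⟨⟨x1, x2⟩, ⟨h1, h2⟩, rfl⟩
    show scalarHom K 2 (chiHom K a k (iEmb K (x1, x2))) * (iEmb K (x1, x2)).2 = 1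
    have hsnd : (iEmb K (x1, x2)).2 = scalarHom K 2 x1 := rfl
    have hfst : (iEmb K (x1, x2)).1 = x2 * x1⁻¹ := rfl
    rw [hsnd, chiHom_apply, hfst, hsnd, det_scalarHom_s9, ← _root_.map_mul,
      hker x1 x2 h1 h2, _root_.map_one]
  refine ⟨QuotientGroup.lift (muGamma K l1 l2) (phiHom K a k) hφ, ?_⟩
  ext x
  show QuotientGroup.mk (phiHom K a k x) = GammaToPGL K l1 l2 (QuotientGroup.mk x)
  have hR : GammaToPGL K l1 l2 (QuotientGroup.mk x) = QuotientGroup.mk x.2 := rfl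
  rw [hR]
  show QuotientGroup.mk (scalarHom K 2 (chiHom K a k x) * x.2) = QuotientGroup.mk x.2
  rw [QuotientGroup.mk_mul]
  have : (QuotientGroup.mk (scalarHom K 2 (chiHom K a k x)) : PGL K 2) = 1 := by
    rw [QuotientGroup.eq_one_iff]
    exact ⟨chiHom K a k x, rfl⟩
  rw [this, one_mul]

/-- The positive direction of Remark 4.10: if `d₁` or `d₂` is odd, then there exists a group
homomorphism `Γ(l₁, l₂) → GL₂(K)` over `PGL₂(K)`. -/
theorem exists_hom_Gamma_to_GL_over_PGL
    {K : Type*} [Field K] [IsAlgClosed K]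
    (d1 d2 l1 l2 : ℕ) (hd1 : 0 < d1) (hd2 : 0 < d2)
    (hl1 : (l1 : ℤ) = 2 * (d1 : ℤ) - (d2 : ℤ)) (hl2 : (l2 : ℤ) = 2 * (d2 : ℤ) - (d1 : ℤ))
    (hl1' : 4 ≤ l1) (hl2' : 4 ≤ l2)
    (hchar : ¬ (ringChar K ∣ 2 * l1 * l2))
    (hodd : Odd d1 ∨ Odd d2) :
    ∃ Ψ : Gamma K l1 l2 →* GL (Fin 2) K,
      (QuotientGroup.mk' (scalarSub K 2)).comp Ψ = GammaToPGL K l1 l2 := by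
  rcases hodd with hd | hd
  · -- d1 odd ⇒ l2 odd; take a = l2, 2k+1 = l2
    have hodd2 : Odd l2 := by
      have : Odd (l2 : ℤ) := by
        rw [hl2]
        exact Even.sub_odd (even_two_mul _) hd.natCast
      exact Int.odd_coe_nat l2 |>.mp this
    obtain ⟨k, hk⟩ := hodd2
    refine key_lemma K l2 k l1 l2 ?_
    intro x1 x2 h1 h2
    rw [mem_rootsOfUnity] at h1 h2
    have hx : (x1 ^ 2) ^ k * x1 = x1 ^ l2 := by
      rw [← pow_mul, ← pow_succ, hk]
    rw [mul_pow, h2, one_mul, inv_pow, mul_assoc, hx, inv_mul_cancel]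
  · -- d2 odd ⇒ l1 odd; take a = 0, 2k+1 = l1
    have hodd1 : Odd l1 := by
      have : Odd (l1 : ℤ) := by
        rw [hl1]
        exact Even.sub_odd (even_two_mul _) hd.natCast
      exact Int.odd_coe_nat l1 |>.mp this
    obtain ⟨k, hk⟩ := hodd1
    refine key_lemma K 0 k l1 l2 ?_
    intro x1 x2 h1 h2
    rw [mem_rootsOfUnity] at h1
    rw [pow_zero, one_mul, ← pow_mul, ← pow_succ, ← hk, h1]

end
end

section
/- There exists a surjective group homomorphism Φ : Γ(d1, d2) → Γ(l1, l2) over PGL_2(K) such that, for every (α, A) ∈ Kˣ × GL_2(K) and any β, γ ∈ K with β^{l1} = α^{d2} and γ^{l2} = α^{2d2}, Φ sends the class of (α, A) in Γ(d1, d2) to the class of (β·γ, β^{−1}·A) in Γ(l1, l2) (this value being independent of the choices of β and γ). -/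
noncomputable section

open Matrix

variable (K : Type*) [Field K]

/-! The triples `t = (α, β, γ)` with `β^{l₁} = α^{d₂}` and `γ^{l₂} = α^{2d₂}` form a subgroup
of `(Kˣ)³`, and `(t, A) ↦ [(β·γ, β⁻¹·A)]` is a homomorphism on triples × `GL₂(K)` because
scalars are central. It factors through `(t, A) ↦ [(α, A)]`, which is onto `Γ(d₁, d₂)` as `K`
is algebraically closed, because it kills the kernel of that map: if `(α, A) = i(x₁, x₂)` with
`x₁ ∈ μ_{d₁}`, `x₂ ∈ μ_{d₂}`, then `(β·γ, β⁻¹·A) = i(β⁻¹x₁, γx₁)`, and `β⁻¹x₁ ∈ μ_{l₁}`,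
`γx₁ ∈ μ_{l₂}` since `d₂ + l₁ = 2d₁` and `d₁ + l₂ = 2d₂`. For surjectivity, given `δ` pick `b`
with `b^{2l₁+l₂} = δ^{l₂}` and `a` with `a^{d₂} = b^{l₁}`; then `(a, b, δ/b)` is a triple. -/

section RootTriples

variable (M : Type*) [CommGroup M]

def rootTriples (d l1 l2 : ℕ) : Subgroup (M × M × M) where
  carrier := {t | t.2.1 ^ l1 = t.1 ^ d ∧ t.2.2 ^ l2 = t.1 ^ (2 * d)}
  mul_mem' := by
    rintro ⟨α, β, γ⟩ ⟨α', β', γ'⟩ ⟨hβ, hγ⟩ ⟨hβ', hγ'⟩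
    exact ⟨by simp [mul_pow, hβ, hβ'], by simp [mul_pow, hγ, hγ']⟩
  one_mem' := by simp
  inv_mem' := by
    rintro ⟨α, β, γ⟩ ⟨hβ, hγ⟩
    exact ⟨by simp [inv_pow, hβ], by simp [inv_pow, hγ]⟩

variable {M}

theorem pow_eq_one_of_mem_rootTriples {d1 d2 l1 l2 : ℕ} {x1 x2 β γ : M}
    (hx1 : x1 ^ d1 = 1) (hx2 : x2 ^ d2 = 1)
    (ht : (x2 * x1⁻¹, β, γ) ∈ rootTriples M d2 l1 l2)
    (h1 : d2 + l1 = 2 * d1) (h2 : d1 + l2 = 2 * d2) :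
    (β⁻¹ * x1) ^ l1 = 1 ∧ (γ * x1) ^ l2 = 1 := by
  obtain ⟨hβ, hγ⟩ := ht
  constructor
  · rw [mul_pow, inv_pow, hβ, mul_pow, inv_pow, hx2, one_mul, inv_inv, ← pow_add, h1, pow_mul',
      hx1, one_pow]
  · rw [mul_pow, hγ, mul_pow, inv_pow, pow_mul' x2 2 d2, hx2, one_pow, one_mul, ← h2, pow_add,
      hx1, one_mul, inv_mul_cancel]

end RootTriples

section Descent

variable (d l1 l2 : ℕ)

/-- `(t, A) ↦ (α, A)` for `t = (α, β, γ)`. -/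
def rootForget : rootTriples Kˣ d l1 l2 × GL (Fin 2) K →* Kˣ × GL (Fin 2) K :=
  ((MonoidHom.fst _ _).comp (rootTriples Kˣ d l1 l2).subtype).prodMap (MonoidHom.id _)

/-- `(t, A) ↦ (β·γ, β⁻¹·A)` for `t = (α, β, γ)`. -/
def rootTwist : rootTriples Kˣ d l1 l2 × GL (Fin 2) K →* Kˣ × GL (Fin 2) K :=
  MonoidHom.mk' (fun p => (p.1.1.2.1 * p.1.1.2.2, scalarHom K 2 p.1.1.2.1⁻¹ * p.2)) <| by
    rintro ⟨⟨⟨-, β, -⟩, -⟩, A⟩ ⟨⟨⟨-, β', -⟩, -⟩, A'⟩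
    have hA := Subgroup.mem_center_iff.mp (scalarHom_mem_center K 2 β'⁻¹) A
    refine Prod.ext (mul_mul_mul_comm _ _ _ _) ?_
    change scalarHom K 2 (β * β')⁻¹ * (A * A') =
      scalarHom K 2 β⁻¹ * A * (scalarHom K 2 β'⁻¹ * A')
    rw [mul_inv, map_mul]
    simp only [mul_assoc]
    rw [← mul_assoc (scalarHom K 2 β'⁻¹) A A', ← hA, mul_assoc]

theorem sndPGL_comp_rootTwist :
    (sndPGL K).comp (rootTwist K d l1 l2) = (sndPGL K).comp (rootForget K d l1 l2) := by
  ext ⟨t, A⟩ : 1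
  change QuotientGroup.mk' _ (scalarHom K 2 t.1.2.1⁻¹ * A) = QuotientGroup.mk' (scalarSub K 2) A
  rw [map_mul, QuotientGroup.mk'_apply, (QuotientGroup.eq_one_iff (N := scalarSub K 2) _).mpr
    (MonoidHom.mem_range.mpr ⟨_, rfl⟩), one_mul]

variable {K}

theorem rootForget_ker_le {d1 : ℕ} (h1 : d + l1 = 2 * d1) (h2 : d1 + l2 = 2 * d) :
    ((QuotientGroup.mk' (muGamma K d1 d)).comp (rootForget K d l1 l2)).ker ≤
      ((QuotientGroup.mk' (muGamma K l1 l2)).comp (rootTwist K d l1 l2)).ker := by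
  rintro ⟨⟨⟨α, β, γ⟩, ht⟩, A⟩ hker
  obtain ⟨⟨x1, x2⟩, ⟨hx1, hx2⟩, hx⟩ := (QuotientGroup.eq_one_iff _).mp hker
  obtain ⟨rfl, rfl⟩ := Prod.ext_iff.mp hx
  obtain ⟨hy1, hy2⟩ := pow_eq_one_of_mem_rootTriples ((mem_rootsOfUnity _ _).mp hx1)
    ((mem_rootsOfUnity _ _).mp hx2) ht h1 h2
  refine (QuotientGroup.eq_one_iff _).mpr ⟨(β⁻¹ * x1, γ * x1),
    ⟨(mem_rootsOfUnity _ _).mpr hy1, (mem_rootsOfUnity _ _).mpr hy2⟩, ?_⟩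
  refine Prod.ext ?_ (map_mul (scalarHom K 2) β⁻¹ x1)
  change γ * x1 * (β⁻¹ * x1)⁻¹ = β * γ
  rw [mul_inv, inv_inv, mul_mul_mul_comm, mul_inv_cancel, mul_one, mul_comm]

end Descent

section AlgClosed

variable {K} [IsAlgClosed K]

theorem exists_unit_pow_eq {n : ℕ} (hn : 0 < n) (a : Kˣ) : ∃ b : Kˣ, b ^ n = a := by
  obtain ⟨z, hz⟩ := IsAlgClosed.exists_pow_nat_eq (a : K) hn
  have hz0 : z ≠ 0 := by
    rintro rfl
    exact a.ne_zero (by rw [← hz, zero_pow hn.ne'])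
  exact ⟨Units.mk0 z hz0, Units.ext (by simpa using hz)⟩

variable {d l1 l2 : ℕ}

theorem exists_mem_rootTriples_fst_eq (hl1 : 0 < l1) (hl2 : 0 < l2) (α : Kˣ) :
    ∃ t ∈ rootTriples Kˣ d l1 l2, t.1 = α := by
  obtain ⟨β, hβ⟩ := exists_unit_pow_eq hl1 (α ^ d)
  obtain ⟨γ, hγ⟩ := exists_unit_pow_eq hl2 (α ^ (2 * d))
  exact ⟨(α, β, γ), ⟨hβ, hγ⟩, rfl⟩

theorem exists_mem_rootTriples_mul_eq (hd : 0 < d) (hl : 0 < 2 * l1 + l2) (δ : Kˣ) :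
    ∃ t ∈ rootTriples Kˣ d l1 l2, t.2.1 * t.2.2 = δ := by
  obtain ⟨b, hb⟩ := exists_unit_pow_eq hl (δ ^ l2)
  obtain ⟨a, ha⟩ := exists_unit_pow_eq hd (b ^ l1)
  refine ⟨(a, b, δ / b), ⟨ha.symm, ?_⟩, mul_div_cancel b δ⟩
  calc (δ / b) ^ l2 = b ^ (2 * l1 + l2) / b ^ l2 := by rw [hb, div_pow]
    _ = (a ^ d) ^ 2 := by rw [ha, pow_add, mul_div_cancel_right, ← pow_mul']
    _ = a ^ (2 * d) := by rw [pow_mul']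

theorem rootForget_surjective (hl1 : 0 < l1) (hl2 : 0 < l2) :
    Function.Surjective (rootForget K d l1 l2) := by
  rintro ⟨α, A⟩
  obtain ⟨t, ht, rfl⟩ := exists_mem_rootTriples_fst_eq (d := d) hl1 hl2 α
  exact ⟨(⟨t, ht⟩, A), rfl⟩

theorem rootTwist_surjective (hd : 0 < d) (hl : 0 < 2 * l1 + l2) :
    Function.Surjective (rootTwist K d l1 l2) := by
  rintro ⟨δ, B⟩
  obtain ⟨t, ht, rfl⟩ := exists_mem_rootTriples_mul_eq hd hl δ
  refine ⟨(⟨t, ht⟩, scalarHom K 2 t.2.1 * B), Prod.ext rfl ?_⟩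
  change scalarHom K 2 t.2.1⁻¹ * (scalarHom K 2 t.2.1 * B) = B
  rw [map_inv, inv_mul_cancel_left]

end AlgClosed

theorem exists_surjective_hom_Gamma_over_PGL_general
    {K : Type*} [Field K] [IsAlgClosed K]
    (d1 d2 l1 l2 : ℕ)
    (hl1 : (l1 : ℤ) = 2 * (d1 : ℤ) - (d2 : ℤ)) (hl2 : (l2 : ℤ) = 2 * (d2 : ℤ) - (d1 : ℤ))
    (hl1' : 4 ≤ l1) (hl2' : 4 ≤ l2) :
    ∃ Φ : Gamma K d1 d2 →* Gamma K l1 l2,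
      Function.Surjective Φ ∧
      (GammaToPGL K l1 l2).comp Φ = GammaToPGL K d1 d2 ∧
      ∀ (α β γ : Kˣ) (A : GL (Fin 2) K),
        β ^ l1 = α ^ d2 → γ ^ l2 = α ^ (2 * d2) →
        Φ (QuotientGroup.mk (α, A)) = QuotientGroup.mk (β * γ, scalarHom K 2 β⁻¹ * A) := by
  have h1 : d2 + l1 = 2 * d1 := by omega
  have h2 : d1 + l2 = 2 * d2 := by omega
  set p := (QuotientGroup.mk' (muGamma K d1 d2)).comp (rootForget K d2 l1 l2)
  set g := (QuotientGroup.mk' (muGamma K l1 l2)).comp (rootTwist K d2 l1 l2)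
  have hp : Function.Surjective p :=
    (QuotientGroup.mk'_surjective _).comp (rootForget_surjective (by omega) (by omega))
  have hg : Function.Surjective g :=
    (QuotientGroup.mk'_surjective _).comp (rootTwist_surjective (by omega) (by omega))
  let Φ := p.liftOfSurjective hp ⟨g, rootForget_ker_le d2 l1 l2 h1 h2⟩
  have hΦ : Φ.comp p = g := p.liftOfRightInverse_comp _ _ _
  refine ⟨Φ, .of_comp (f := Φ) (hΦ ▸ hg), ?_, ?_⟩
  · refine (MonoidHom.cancel_right hp).mp ?_
    rw [MonoidHom.comp_assoc, hΦ, ← MonoidHom.comp_assoc, ← MonoidHom.comp_assoc]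
    exact sndPGL_comp_rootTwist K d2 l1 l2
  · intro α β γ A hβ hγ
    exact DFunLike.congr_fun hΦ (⟨(α, β, γ), hβ, hγ⟩, A)

/-- The homomorphism `Φ` of Remark 4.12: a surjective homomorphism
`Γ(d₁, d₂) → Γ(l₁, l₂)` over `PGL₂(K)` sending the class of `(α, A)` to the class of
`(β·γ, β⁻¹·A)` for any `β, γ` with `β^{l₁} = α^{d₂}` and `γ^{l₂} = α^{2d₂}`. -/
theorem exists_surjective_hom_Gamma_over_PGL
    {K : Type*} [Field K] [IsAlgClosed K]
    (d1 d2 l1 l2 : ℕ) (hd1 : 0 < d1) (hd2 : 0 < d2)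
    (hl1 : (l1 : ℤ) = 2 * (d1 : ℤ) - (d2 : ℤ)) (hl2 : (l2 : ℤ) = 2 * (d2 : ℤ) - (d1 : ℤ))
    (hl1' : 4 ≤ l1) (hl2' : 4 ≤ l2)
    (hchar : ¬ (ringChar K ∣ 2 * l1 * l2)) :
    ∃ Φ : Gamma K d1 d2 →* Gamma K l1 l2,
      Function.Surjective Φ ∧
      (GammaToPGL K l1 l2).comp Φ = GammaToPGL K d1 d2 ∧
      ∀ (α β γ : Kˣ) (A : GL (Fin 2) K),
        β ^ l1 = α ^ d2 → γ ^ l2 = α ^ (2 * d2) →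
        Φ (QuotientGroup.mk (α, A)) = QuotientGroup.mk (β * γ, scalarHom K 2 β⁻¹ * A) :=
  exists_surjective_hom_Gamma_over_PGL_general d1 d2 l1 l2 hl1 hl2 hl1' hl2'

end
end
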